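/- arXiv:1012.0975 — 2 statements merged into one kernel-verified Lean document; each statement's English description precedes it below -/
import Mathlib

section
/- Let $K$ be a real symmetric $p\times p$ matrix and $\alpha>0$. If $X$ is a real symmetric positive definite $p\times p$ matrix that commutes with $K$, then $X' := \tfrac{1}{2}\big(X + X^{-1}(K^2+\alpha I)\big)$ is symmetric, positive definite, and commutes with $K$. -/
/-!
Since `X` commutes with the hermitian `K`, so does `X⁻¹`, and `X⁻¹ (K² + α) = K X⁻¹ Kᴴ + α X⁻¹`
is a positive semidefinite plus a positive definite matrix. Hence `X + X⁻¹ (K² + α)` is positive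
definite, and it commutes with `K` because each of its pieces does.
-/

open scoped ComplexOrder

namespace Matrix

variable {n : Type*} [Fintype n] [DecidableEq n]

theorem commute_nonsing_inv_left {R : Type*} [CommRing R] {A B : Matrix n n R}
    (h : Commute A B) : Commute A⁻¹ B := by
  by_cases hA : IsUnit A.det
  · let := invertibleOfIsUnitDet A hA
    simpa only [invOf_eq_nonsing_inv] using h.invOf_left
  · rw [nonsing_inv_apply_not_isUnit A hA]
    exact Commute.zero_left B

variable {𝕜 : Type*} [RCLike 𝕜]

theorem PosDef.inv_mul_sq_add_smul_one {X K : Matrix n n 𝕜} (hX : X.PosDef)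
    (hK : K.IsHermitian) (hXK : Commute X K) {α : ℝ} (hα : 0 < α) :
    (X⁻¹ * (K ^ 2 + α • 1)).PosDef := by
  have hsplit : X⁻¹ * (K ^ 2 + α • 1) = K * X⁻¹ * Kᴴ + α • X⁻¹ := by
    rw [hK.eq, mul_add, mul_smul_comm, mul_one, sq, ← mul_assoc,
      (commute_nonsing_inv_left hXK).eq]
  rw [hsplit]
  exact .posSemidef_add (hX.inv.posSemidef.mul_mul_conjTranspose_same K) (hX.inv.smul hα)

end Matrix

/-- One step of the matrix Newton iteration preserves symmetry, positive
definiteness, and commutation with `K`. -/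
theorem matrix_newton_step_posDef_commute (p : ℕ) (K : Matrix (Fin p) (Fin p) ℝ)
    (hK : K.IsHermitian) (α : ℝ) (hα : 0 < α) (X : Matrix (Fin p) (Fin p) ℝ)
    (hX : X.PosDef) (hcomm : X * K = K * X) :
    ((1 / 2 : ℝ) • (X + X⁻¹ * (K ^ 2 + α • (1 : Matrix (Fin p) (Fin p) ℝ)))).PosDef ∧
      (1 / 2 : ℝ) • (X + X⁻¹ * (K ^ 2 + α • (1 : Matrix (Fin p) (Fin p) ℝ))) * K =
        K * ((1 / 2 : ℝ) • (X + X⁻¹ * (K ^ 2 + α • (1 : Matrix (Fin p) (Fin p) ℝ)))) := by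
  constructor
  · exact (hX.add (hX.inv_mul_sq_add_smul_one hK hcomm hα)).smul (by norm_num)
  · have hcommX : Commute X K := hcomm
    have hcommInv : Commute X⁻¹ K := Matrix.commute_nonsing_inv_left hcommX
    have hcommShift : Commute (K ^ 2 + α • 1) K :=
      ((Commute.refl K).pow_left 2).add_left ((Commute.one_left K).smul_left α)
    exact ((hcommX.add_left (hcommInv.mul_left hcommShift)).smul_left _).eq
end

section
/- Let $K$ be a real symmetric $p\times p$ matrix, $\alpha>0$, and define $X_0=\sqrt{\alpha}\,I$, $X_{k+1}=\tfrac{1}{2}\big(X_k + X_k^{-1}(K^2+\alpha I)\big)$. Then for every $k\ge 1$, the matrix $X_k-\sqrt{K^2+\alpha I}$ is positive semidefinite. -/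
/-!
Every Newton iterate `X` is positive definite and commutes with `S = √(K² + αI)`, because `X₀` is a
multiple of the identity and both properties pass to `(X + X⁻¹ S²) / 2`. For such `X` the
step satisfies `(X + X⁻¹ S²) / 2 - S = (X - S) X⁻¹ (X - S) / 2`, a congruence of the positive
definite matrix `X⁻¹` by the Hermitian matrix `X - S`, hence positive semidefinite.
-/

namespace Matrix.PosSemidef

open scoped ComplexOrder

/-- The positive semidefinite square root of a positive semidefinite matrix
(the definition removed from Mathlib, restored with its old meaning). -/
noncomputable def sqrt {n : Type*} [Fintype n] [DecidableEq n] {𝕜 : Type*} [RCLike 𝕜]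
    {A : Matrix n n 𝕜} (hA : A.PosSemidef) : Matrix n n 𝕜 :=
  hA.1.eigenvectorUnitary.1 * Matrix.diagonal ((↑) ∘ (√·) ∘ hA.1.eigenvalues) *
    (star hA.1.eigenvectorUnitary : Matrix n n 𝕜)

variable {n 𝕜 : Type*} [Fintype n] [DecidableEq n] [RCLike 𝕜] {A : Matrix n n 𝕜}

theorem posSemidef_sqrt (hA : A.PosSemidef) : hA.sqrt.PosSemidef := by
  have hD : (diagonal ((↑) ∘ (√·) ∘ hA.1.eigenvalues : n → 𝕜)).PosSemidef :=
    PosSemidef.diagonal fun i => RCLike.ofReal_nonneg.2 (Real.sqrt_nonneg _)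
  simpa only [sqrt, star_eq_conjTranspose] using
    hD.mul_mul_conjTranspose_same (hA.1.eigenvectorUnitary : Matrix n n 𝕜)

theorem sqrt_mul_self (hA : A.PosSemidef) : hA.sqrt * hA.sqrt = A := by
  set U : Matrix n n 𝕜 := (hA.1.eigenvectorUnitary : Matrix n n 𝕜)
  have hU : star U * U = 1 := Unitary.coe_star_mul_self _
  have hD : diagonal ((↑) ∘ (√·) ∘ hA.1.eigenvalues : n → 𝕜) *
      diagonal ((↑) ∘ (√·) ∘ hA.1.eigenvalues) = diagonal ((↑) ∘ hA.1.eigenvalues) := by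
    rw [diagonal_mul_diagonal]
    congr 1
    funext i
    simp [← RCLike.ofReal_mul, Real.mul_self_sqrt (hA.eigenvalues_nonneg i)]
  conv_rhs => rw [hA.1.spectral_theorem, Unitary.conjStarAlgAut_apply, ← hD]
  simp only [sqrt, Matrix.mul_assoc]
  rw [← Matrix.mul_assoc (star U), hU, Matrix.one_mul]

end Matrix.PosSemidef

namespace Matrix

open scoped ComplexOrder

variable {n 𝕜 : Type*} [Fintype n] [DecidableEq n] [RCLike 𝕜] {A S : Matrix n n 𝕜}

theorem commute_nonsing_inv_left_s7 (h : Commute A S) : Commute A⁻¹ S := by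
  by_cases hA : IsUnit A.det
  · obtain ⟨u, rfl⟩ := (isUnit_iff_isUnit_det A).2 hA
    rw [← coe_units_inv]
    exact h.units_inv_left
  · rw [nonsing_inv_apply_not_isUnit A hA]
    exact Commute.zero_left S

noncomputable def newtonSqrtStep (P A : Matrix n n 𝕜) : Matrix n n 𝕜 :=
  (1 / 2 : ℝ) • (A + A⁻¹ * P)

theorem Commute.newtonSqrtStep (h : Commute A S) : Commute (newtonSqrtStep (S * S) A) S :=
  (h.add_left <| (commute_nonsing_inv_left_s7 h).mul_left <|
    (Commute.refl S).mul_left (.refl S)).smul_left _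

theorem newtonSqrtStep_sub_eq (hA : IsUnit A.det) (h : Commute A S) :
    newtonSqrtStep (S * S) A - S = (1 / 2 : ℝ) • ((A - S) * A⁻¹ * (A - S)) := by
  have hinv : Commute A⁻¹ S := commute_nonsing_inv_left_s7 h
  have expand : (A - S) * A⁻¹ * (A - S) = A + A⁻¹ * (S * S) - 2 • S := by
    rw [sub_mul, sub_mul, mul_sub, mul_sub, mul_nonsing_inv A hA, Matrix.one_mul, Matrix.one_mul,
      Matrix.mul_assoc S, nonsing_inv_mul A hA, Matrix.mul_one, ← hinv.eq, Matrix.mul_assoc]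
    abel
  rw [expand, newtonSqrtStep]
  module

theorem PosDef.newtonSqrtStep (hA : A.PosDef) (hS : S.IsHermitian) (h : Commute A S) :
    (newtonSqrtStep (S * S) A).PosDef := by
  have hcongr : A⁻¹ * (S * S) = S * A⁻¹ * Sᴴ := by
    rw [hS.eq, ← Matrix.mul_assoc, (commute_nonsing_inv_left_s7 h).eq]
  rw [Matrix.newtonSqrtStep, hcongr]
  exact (hA.add_posSemidef (hA.inv.posSemidef.mul_mul_conjTranspose_same S)).smul (by norm_num)

theorem PosDef.posSemidef_newtonSqrtStep_sub (hA : A.PosDef) (hS : S.IsHermitian)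
    (h : Commute A S) : (Matrix.newtonSqrtStep (S * S) A - S).PosSemidef := by
  have hAS : (A - S)ᴴ = A - S := (hA.isHermitian.sub hS).eq
  rw [newtonSqrtStep_sub_eq ((isUnit_iff_isUnit_det A).1 hA.isUnit) h]
  refine PosSemidef.smul ?_ (by norm_num)
  simpa only [hAS] using hA.inv.posSemidef.mul_mul_conjTranspose_same (A - S)

end Matrix

open Matrix

theorem matrix_newton_iter_ge_sqrt_general (p : ℕ) (K : Matrix (Fin p) (Fin p) ℝ)
    (α : ℝ) (hα : 0 < α)
    (hP : (K ^ 2 + α • (1 : Matrix (Fin p) (Fin p) ℝ)).PosSemidef)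
    (X : ℕ → Matrix (Fin p) (Fin p) ℝ)
    (hX0 : X 0 = Real.sqrt α • (1 : Matrix (Fin p) (Fin p) ℝ))
    (hXs : ∀ k, X (k + 1) =
      (1 / 2 : ℝ) • (X k + (X k)⁻¹ * (K ^ 2 + α • (1 : Matrix (Fin p) (Fin p) ℝ)))) :
    ∀ k, 1 ≤ k → (X k - hP.sqrt).PosSemidef := by
  set S := hP.sqrt
  have hS : S.IsHermitian := hP.posSemidef_sqrt.isHermitian
  have hstep : ∀ k, X (k + 1) = newtonSqrtStep (S * S) (X k) := fun k => by
    rw [hXs, hP.sqrt_mul_self, newtonSqrtStep]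
  have hiter : ∀ k, (X k).PosDef ∧ Commute (X k) S := by
    intro k
    induction k with
    | zero => exact hX0 ▸ ⟨PosDef.one.smul (Real.sqrt_pos.2 hα), (Commute.one_left S).smul_left _⟩
    | succ k ih => exact hstep k ▸ ⟨ih.1.newtonSqrtStep hS ih.2, ih.2.newtonSqrtStep⟩
  intro k hk
  obtain ⟨j, rfl⟩ := Nat.exists_eq_add_of_le' hk
  rw [hstep]
  exact (hiter j).1.posSemidef_newtonSqrtStep_sub hS (hiter j).2

/-- From the first step on, the matrix Newton iterates dominate the true square
root `√(K ^ 2 + α • I)` in the Loewner order, i.e. `X k - √(K ^ 2 + α • I)` is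
positive semidefinite for `k ≥ 1`.  The hypothesis `hP` is automatically
satisfied since `K` is symmetric and `α > 0`. -/
theorem matrix_newton_iter_ge_sqrt (p : ℕ) (K : Matrix (Fin p) (Fin p) ℝ)
    (hK : K.IsHermitian) (α : ℝ) (hα : 0 < α)
    (hP : (K ^ 2 + α • (1 : Matrix (Fin p) (Fin p) ℝ)).PosSemidef)
    (X : ℕ → Matrix (Fin p) (Fin p) ℝ)
    (hX0 : X 0 = Real.sqrt α • (1 : Matrix (Fin p) (Fin p) ℝ))
    (hXs : ∀ k, X (k + 1) =
      (1 / 2 : ℝ) • (X k + (X k)⁻¹ * (K ^ 2 + α • (1 : Matrix (Fin p) (Fin p) ℝ)))) :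
    ∀ k, 1 ≤ k → (X k - hP.sqrt).PosSemidef :=
  matrix_newton_iter_ge_sqrt_general p K α hα hP X hX0 hXs
end
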